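/- arXiv:2202.09585 — 2 statements merged into one kernel-verified Lean document; each statement's English description precedes it below -/
import Mathlib

section
/- Pair correlation of characteristic polynomial inverses, case M ≤ N: Let 1 ≤ M ≤ N, let P_0,…,P_{N−1} and Q_0,…,Q_{N−1} be biorthogonal monic polynomials with normalization constants h_0,…,h_{N−1}, all nonzero, and assume all integrals involved are absolutely convergent. Assume w_L and w_R vanish outside a bounded set [−R, R], let z_1,…,z_M ∈ ℂ be pairwise distinct and w_1,…,w_M ∈ ℂ be pairwise distinct, with |z_α| > R and |w_α| > R for all α. Then I_N[ ∏_{α=1}^M ∏_{i=1}^N (z_α − x_{L,i})^{−1} (w_α − x_{R,i})^{−1} ] = ( ∏_{i=0}^{N−M−1} h_i / (Δ_M(Z) Δ_M(W)) ) · det_{1≤α,β≤M}( ⟨(z_α − ·)^{−1}|ω|(w_β − ·)^{−1}⟩ − ∑_{i=0}^{N−M−1} h_i^{−1} ⟨(z_α − ·)^{−1}|ω|Q_i⟩ · ⟨P_i|ω|(w_β − ·)^{−1}⟩ ), where Δ_M(Z) = ∏_{α<β}(z_α − z_β) and Δ_M(W) = ∏_{α<β}(w_α − w_β). -/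
open MeasureTheory Matrix Finset

/-- Vandermonde product `∏_{i<j} (x_i − x_j)` of a real tuple, as a complex number. -/
noncomputable def Delta {n : ℕ} (x : Fin n → ℝ) : ℂ :=
  ∏ i : Fin n, ∏ j ∈ Finset.Ioi i, ((x i : ℂ) - (x j : ℂ))

/-- Vandermonde product `∏_{α<β} (z_α − z_β)` of a complex tuple. -/
noncomputable def DeltaC {n : ℕ} (z : Fin n → ℂ) : ℂ :=
  ∏ i : Fin n, ∏ j ∈ Finset.Ioi i, (z i - z j)

/-- Integrand of the pairing `⟨f|ω|g⟩`. -/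
noncomputable def pairingIntegrand (wL wR : ℝ → ℂ) (ω : ℝ → ℝ → ℂ) (f g : ℝ → ℂ) :
    ℝ × ℝ → ℂ :=
  fun s => wL s.1 * wR s.2 * f s.1 * ω s.1 s.2 * g s.2

/-- The pairing `⟨f|ω|g⟩ = ∫ w_L(x) w_R(y) f(x) ω(x,y) g(y) dx dy`. -/
noncomputable def pairing (wL wR : ℝ → ℂ) (ω : ℝ → ℝ → ℂ) (f g : ℝ → ℂ) : ℂ :=
  ∫ s : ℝ × ℝ, pairingIntegrand wL wR ω f g s

/-- Integrand of the un-normalized coupled-matrix-model average `I_N[O]`. -/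
noncomputable def cmmIntegrand (N : ℕ) (wL wR : ℝ → ℂ) (ω : ℝ → ℝ → ℂ)
    (O : (Fin N → ℝ) → (Fin N → ℝ) → ℂ) : (Fin N → ℝ) × (Fin N → ℝ) → ℂ :=
  fun X => O X.1 X.2 * (∏ i, wL (X.1 i) * wR (X.2 i)) * Delta X.1 *
    (Matrix.of fun i j => ω (X.1 i) (X.2 j)).det * Delta X.2

/-- The un-normalized average `I_N[O]` of the coupled matrix model. -/
noncomputable def cmmAvg (N : ℕ) (wL wR : ℝ → ℂ) (ω : ℝ → ℝ → ℂ)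
    (O : (Fin N → ℝ) → (Fin N → ℝ) → ℂ) : ℂ :=
  ((N.factorial : ℂ) ^ 2)⁻¹ * ∫ X : (Fin N → ℝ) × (Fin N → ℝ), cmmIntegrand N wL wR ω O X

/-!
Write `N = n + M`. On the support of the weights no `x_i` or `y_i` equals a `z_α` or `w_α`,
and there `Δ_N(x) ∏_{α,i} (z_α - x_i)⁻¹ = ± Δ_M(z)⁻¹ det A(x)`, where the rows of the
`N × N` matrix `A(x)` are `P_0, …, P_{n-1}` and `(z_α - ·)⁻¹` evaluated at the `x_j`
(a Cauchy–Vandermonde identity); the same holds for `y`, `Q`, `w`, and the two signs cancel.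
Multiplying column `j` by `∏_α (z_α - x_j)` turns every row into a polynomial of degree `< N`,
so `det A(x) ∏_{α,j} (z_α - x_j)` is the Vandermonde determinant of `x` times the determinant
of the coefficient matrix; the latter is computed once and for all by evaluating at `N` nodes
`η_0, …, η_{n-1}, z_1, …, z_M`, where the evaluation matrix is block triangular.

Andréief's identity turns the average of `det A(x) det ω(x_i, y_j) det B(y)` into
`N!² det ⟨a_i|ω|b_j⟩`. By biorthogonality this Gram matrix is `[[diag h, U], [V, K]]`, and
its Schur complement with respect to `diag h` is the matrix in the statement.
-/

theorem prod_prod_Ioi_add {M : Type*} [CommMonoid M] {n m : ℕ}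
    (G : Fin (n + m) → Fin (n + m) → M) :
    ∏ i, ∏ j ∈ Ioi i, G i j =
      (∏ k : Fin n, ∏ l ∈ Ioi k, G (Fin.castAdd m k) (Fin.castAdd m l)) *
        (∏ α : Fin m, ∏ β ∈ Ioi α, G (Fin.natAdd n α) (Fin.natAdd n β)) *
        ∏ k : Fin n, ∏ α : Fin m, G (Fin.castAdd m k) (Fin.natAdd n α) := by
  have hIoi : ∀ {N : ℕ} (i : Fin N) (F : Fin N → M),
      ∏ j ∈ Ioi i, F j = ∏ j, if i < j then F j else 1 := fun i F => by
    rw [← prod_filter]; congr 1; ext; simp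
  have hlt : ∀ (k : Fin n) (α : Fin m), Fin.castAdd m k < Fin.natAdd n α := fun k α => by
    simp only [Fin.lt_def, Fin.val_castAdd, Fin.val_natAdd]; omega
  have hnlt : ∀ (α : Fin m) (k : Fin n), ¬ Fin.natAdd n α < Fin.castAdd m k := fun α k =>
    not_lt.2 (hlt k α).le
  have hcc : ∀ k l : Fin n, Fin.castAdd m k < Fin.castAdd m l ↔ k < l := fun k l => by
    simp only [Fin.lt_def, Fin.val_castAdd]
  simp only [hIoi, Fin.prod_univ_add, hcc, Fin.natAdd_lt_natAdd_iff, hlt, hnlt, if_true,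
    if_false, prod_const_one, mul_one, prod_mul_distrib]
  ac_rfl

theorem det_vandermonde_append {R : Type*} [CommRing R] {n m : ℕ} (u : Fin n → R)
    (v : Fin m → R) :
    (vandermonde (Fin.append u v)).det =
      (vandermonde u).det * (vandermonde v).det * ∏ k, ∏ α, (v α - u k) := by
  simp only [det_vandermonde, prod_prod_Ioi_add, Fin.append_left, Fin.append_right]

theorem prod_prod_compl_sub_eq_det_vandermonde_mul {R : Type*} [CommRing R] {m : ℕ}
    (z : Fin m → R) :
    ∏ α, ∏ β ∈ {α}ᶜ, (z β - z α) = (vandermonde z).det * ∏ α, ∏ β ∈ Ioi α, (z α - z β) := by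
  rw [← prod_prod_Ioi_mul_eq_prod_prod_off_diag, det_vandermonde, ← prod_mul_distrib]
  simp only [prod_mul_distrib]

theorem prod_Ioi_sub_mul_prod_Ioi_sub {R : Type*} [CommRing R] {n : ℕ} (u v : Fin n → R) :
    (∏ i, ∏ j ∈ Ioi i, (u i - u j)) * ∏ i, ∏ j ∈ Ioi i, (v i - v j) =
      (∏ i, ∏ j ∈ Ioi i, (u j - u i)) * ∏ i, ∏ j ∈ Ioi i, (v j - v i) := by
  have hflip : ∀ u : Fin n → R, ∏ i, ∏ j ∈ Ioi i, (u i - u j) =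
      (∏ i : Fin n, (-1) ^ #(Ioi i)) * ∏ i, ∏ j ∈ Ioi i, (u j - u i) := fun u => by
    rw [← prod_mul_distrib]
    refine prod_congr rfl fun i _ => ?_
    rw [← prod_neg]
    simp only [neg_sub]
  rw [hflip u, hflip v, mul_mul_mul_comm, ← prod_mul_distrib]
  simp [← mul_pow]

theorem exists_injective_forall_notMem {K : Type*} [Infinite K] (n : ℕ) {s : Set K}
    (hs : s.Finite) : ∃ η : Fin n → K, Function.Injective η ∧ ∀ k, η k ∉ s := by
  have := hs.infinite_compl.to_subtype
  let e := Infinite.natEmbedding (↥sᶜ)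
  exact ⟨fun k => (e k : K), Subtype.val_injective.comp (e.injective.comp Fin.val_injective),
    fun k => (e k).2⟩

open Polynomial in
theorem det_eval_eq_det_coeff_mul_det_vandermonde {R : Type*} [CommRing R] {N : ℕ}
    (f : Fin N → R[X]) (hf : ∀ i, (f i).natDegree < N) (x : Fin N → R) :
    (of fun i j => (f i).eval (x j)).det =
      (of fun i (l : Fin N) => (f i).coeff l).det * (vandermonde x).det := by
  rw [← det_transpose (vandermonde x), ← det_mul]
  congr 1
  ext i j
  simp only [of_apply, mul_apply, transpose_apply, vandermonde_apply]
  rw [eval_eq_sum_range' (hf i), Fin.sum_univ_eq_sum_range (fun l => (f i).coeff l * x j ^ l)]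

open Polynomial in
theorem natDegree_prod_C_sub_X_le {R : Type*} [CommRing R] {ι : Type*} (z : ι → R)
    (s : Finset ι) : (∏ β ∈ s, (C (z β) - X)).natDegree ≤ #s := by
  refine (natDegree_prod_le _ _).trans ?_
  rw [card_eq_sum_ones]
  exact sum_le_sum fun β _ => (natDegree_sub_le _ _).trans (max_le (by simp) natDegree_X_le)

theorem det_fromBlocks_diagonal₁₁ {ι κ K : Type*} [Fintype ι] [DecidableEq ι] [Fintype κ]
    [DecidableEq κ] [Field K] {d : ι → K} (hd : ∀ i, d i ≠ 0) (U : Matrix ι κ K)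
    (V : Matrix κ ι K) (W : Matrix κ κ K) :
    (fromBlocks (diagonal d) U V W).det =
      (∏ i, d i) * (of fun α β => W α β - ∑ k, (d k)⁻¹ * (V α k * U k β)).det := by
  let : Invertible (diagonal d) := ⟨diagonal d⁻¹, by simp [hd], by simp [hd]⟩
  rw [det_fromBlocks₁₁, det_diagonal, show ⅟(diagonal d) = diagonal d⁻¹ from rfl]
  congr 2
  ext α β
  rw [Matrix.sub_apply, of_apply, mul_apply]
  congr 1
  refine sum_congr rfl fun k _ => ?_
  rw [mul_diagonal, Pi.inv_apply]
  ring

section CauchyVandermonde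

open Polynomial

variable {K : Type*} [Field K] {n m : ℕ}

noncomputable def cauchyVandermondePoly (p : Fin n → K[X]) (z : Fin m → K) :
    Fin n ⊕ Fin m → K[X] :=
  Sum.elim (fun k => p k * ∏ α, (C (z α) - X)) (fun α => ∏ β ∈ {α}ᶜ, (C (z β) - X))

noncomputable def cauchyVandermondeRow (p : Fin n → K[X]) (z : Fin m → K) :
    Fin n ⊕ Fin m → K → K :=
  Sum.elim (fun k u => (p k).eval u) (fun α u => (z α - u)⁻¹)

theorem natDegree_cauchyVandermondePoly_lt (p : Fin n → K[X])
    (hp : ∀ k, (p k).natDegree = k) (z : Fin m → K) (i : Fin n ⊕ Fin m) :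
    (cauchyVandermondePoly p z i).natDegree < n + m := by
  rcases i with k | α
  · have hE := natDegree_prod_C_sub_X_le z univ
    rw [card_univ, Fintype.card_fin] at hE
    have hmul := natDegree_mul_le (p := p k) (q := ∏ α, (C (z α) - X))
    have hk := k.isLt
    rw [hp k] at hmul
    simp only [cauchyVandermondePoly, Sum.elim_inl]
    omega
  · have hE := natDegree_prod_C_sub_X_le z {α}ᶜ
    rw [card_compl, card_singleton, Fintype.card_fin] at hE
    have hα := α.isLt
    simp only [cauchyVandermondePoly, Sum.elim_inr]
    omega

theorem cauchyVandermondeRow_mul_prod (p : Fin n → K[X]) (z : Fin m → K) (i : Fin n ⊕ Fin m)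
    {u : K} (hu : ∀ α, z α ≠ u) :
    cauchyVandermondeRow p z i u * ∏ α, (z α - u) = (cauchyVandermondePoly p z i).eval u := by
  rcases i with k | α
  · simp [cauchyVandermondeRow, cauchyVandermondePoly, eval_prod]
  · simp only [cauchyVandermondeRow, cauchyVandermondePoly, Sum.elim_inr, eval_prod, eval_sub,
      eval_C, eval_X, Fintype.prod_eq_mul_prod_compl α]
    exact inv_mul_cancel_left₀ (sub_ne_zero.2 (hu α)) _

theorem submatrix_eval_cauchyVandermondePoly_append (p : Fin n → K[X]) (z : Fin m → K)
    (η : Fin n → K) :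
    (of fun i j => (cauchyVandermondePoly p z (finSumFinEquiv.symm i)).eval
        (Fin.append η z j)).submatrix finSumFinEquiv finSumFinEquiv =
      fromBlocks (of fun k l => (∏ α, (z α - η l)) * (p k).eval (η l)) 0
        (of fun α l => (cauchyVandermondePoly p z (Sum.inr α)).eval (η l))
        (diagonal fun α => ∏ β ∈ {α}ᶜ, (z β - z α)) := by
  ext (k | α) (l | β)
  · simp [cauchyVandermondePoly, eval_prod, mul_comm]
  · simp [cauchyVandermondePoly, eval_prod, prod_eq_zero (mem_univ β)]
  · simp
  · by_cases hαβ : α = β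
    · subst hαβ
      simp [cauchyVandermondePoly, eval_prod]
    · simp only [submatrix_apply, of_apply, fromBlocks_apply₂₂, diagonal_apply_ne _ hαβ,
        finSumFinEquiv_apply_right, Fin.append_right, finSumFinEquiv_symm_apply_natAdd,
        cauchyVandermondePoly, Sum.elim_inr, eval_prod, eval_sub, eval_C, eval_X]
      exact prod_eq_zero (i := β) (by simpa using Ne.symm hαβ) (sub_self _)

variable [Infinite K]

theorem det_coeff_cauchyVandermondePoly (p : Fin n → K[X]) (hp_deg : ∀ k, (p k).natDegree = k)
    (hp_monic : ∀ k, (p k).Monic) (z : Fin m → K) (hz : Function.Injective z) :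
    (of fun i (l : Fin (n + m)) =>
        (cauchyVandermondePoly p z (finSumFinEquiv.symm i)).coeff l).det =
      ∏ α, ∏ β ∈ Ioi α, (z α - z β) := by
  obtain ⟨η, hη, hηz⟩ := exists_injective_forall_notMem n (Set.finite_range z)
  have hηz' : Function.Injective (Fin.append η z) :=
    Fin.append_injective_iff.2 ⟨hη, hz, fun k α h => hηz k ⟨α, h.symm⟩⟩
  have hTL : (of fun k l => (∏ α, (z α - η l)) * (p k).eval (η l)).det =
      (∏ l, ∏ α, (z α - η l)) * (vandermonde η).det := by
    have hrow := det_mul_row (fun l => ∏ α, (z α - η l)) (of fun k l => (p k).eval (η l))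
    simp only [of_apply] at hrow
    rw [hrow, det_eval_matrixOfPolynomials_eq_det_vandermonde η p hp_deg hp_monic,
      ← det_transpose]
    rfl
  have key := det_eval_eq_det_coeff_mul_det_vandermonde _
    (fun i => natDegree_cauchyVandermondePoly_lt p hp_deg z (finSumFinEquiv.symm i))
    (Fin.append η z)
  rw [← det_submatrix_equiv_self finSumFinEquiv, submatrix_eval_cauchyVandermondePoly_append,
    det_fromBlocks_zero₁₂, det_diagonal, hTL, prod_prod_compl_sub_eq_det_vandermonde_mul,
    det_vandermonde_append] at key
  refine mul_right_cancel₀ (det_vandermonde_ne_zero_iff.2 hηz') ?_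
  rw [det_vandermonde_append, ← key]
  ring

theorem det_cauchyVandermondeRow_mul_prod (p : Fin n → K[X])
    (hp_deg : ∀ k, (p k).natDegree = k) (hp_monic : ∀ k, (p k).Monic) (z : Fin m → K)
    (hz : Function.Injective z) (x : Fin (n + m) → K) (hzx : ∀ α j, z α ≠ x j) :
    (of fun i j => cauchyVandermondeRow p z (finSumFinEquiv.symm i) (x j)).det *
        ∏ j, ∏ α, (z α - x j) =
      (∏ α, ∏ β ∈ Ioi α, (z α - z β)) * (vandermonde x).det := by
  rw [← det_coeff_cauchyVandermondePoly p hp_deg hp_monic z hz,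
    ← det_eval_eq_det_coeff_mul_det_vandermonde _
      (fun i => natDegree_cauchyVandermondePoly_lt p hp_deg z _),
    ← det_diagonal, ← det_mul]
  congr 1
  ext i j
  rw [mul_diagonal, of_apply, of_apply,
    cauchyVandermondeRow_mul_prod p z _ fun α => hzx α j]

end CauchyVandermonde

section PermutationExpansion

open Equiv

variable {ι α β R : Type*} [Fintype ι] [DecidableEq ι] [CommRing R]

theorem sum_sign_mul_prod_apply_perm (G : Matrix ι ι R) (ρ : Perm ι) :
    ∑ τ : Perm ι, (Perm.sign τ : R) * ∏ j, G (τ j) (ρ j) = Perm.sign ρ * G.det := by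
  rw [← det_permute' ρ G, det_apply']
  rfl

theorem sum_sum_sum_sign_mul_prod_apply_perm (G : Matrix ι ι R) :
    ∑ σ : Perm ι, ∑ π : Perm ι, ∑ τ : Perm ι,
        (Perm.sign σ * Perm.sign π * Perm.sign τ : R) * ∏ j, G (τ j) ((σ * π) j) =
      ((Fintype.card ι).factorial : R) ^ 2 * G.det := by
  have hsign (σ π : Perm ι) : (Perm.sign σ * Perm.sign π * Perm.sign (σ * π) : R) = 1 := by
    rw [Perm.sign_mul, ← Int.cast_mul, ← Units.val_mul, ← Int.cast_mul, ← Units.val_mul,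
      Int.units_mul_self, Units.val_one, Int.cast_one]
  simp only [mul_assoc, ← mul_sum, sum_sign_mul_prod_apply_perm]
  simp only [mul_sum, ← mul_assoc, hsign, one_mul, sum_const, card_univ, Fintype.card_perm,
    nsmul_eq_mul, sq]

theorem det_mul_det_mul_det_eq_sum (f : ι → α → R) (K : α → β → R)
    (g : ι → β → R) (x : ι → α) (y : ι → β) :
    (of fun i j => f i (x j)).det * (of fun i j => K (x i) (y j)).det *
        (of fun i j => g i (y j)).det =
      ∑ σ : Perm ι, ∑ π : Perm ι, ∑ τ : Perm ι,
        (Perm.sign σ * Perm.sign π * Perm.sign τ : R) *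
          ∏ j, (f (τ j) (x j) * K (x j) (y (π j)) * g ((σ * π) j) (y (π j))) := by
  rw [← det_transpose (of fun i j => K (x i) (y j))]
  simp only [det_apply', mul_sum, transpose_apply, of_apply]
  simp only [sum_mul]
  refine sum_congr rfl fun σ _ => sum_congr rfl fun π _ => sum_congr rfl fun τ _ => ?_
  rw [← Equiv.prod_comp π fun i => g (σ i) (y i)]
  simp only [prod_mul_distrib, Perm.mul_apply]
  ring

end PermutationExpansion

section Andreief

open Equiv

variable {ι α β 𝕜 : Type*}

noncomputable def arrowProdEquivProdArrowPerm [MeasurableSpace α] [MeasurableSpace β]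
    (ρ : Perm ι) :
    (ι → α × β) ≃ᵐ (ι → α) × (ι → β) :=
  (MeasurableEquiv.arrowProdEquivProdArrow α β ι).trans
    ((MeasurableEquiv.refl _).prodCongr (MeasurableEquiv.piCongrLeft (fun _ => β) ρ))

theorem arrowProdEquivProdArrowPerm_apply [MeasurableSpace α] [MeasurableSpace β] (ρ : Perm ι)
    (s : ι → α × β) (j : ι) :
    ((arrowProdEquivProdArrowPerm ρ s).1 j, (arrowProdEquivProdArrowPerm ρ s).2 (ρ j)) = s j :=
  Prod.ext rfl (MeasurableEquiv.piCongrLeft_apply_apply (β := fun _ => β) ρ (fun i => (s i).2) j)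

variable [Fintype ι] [MeasureSpace α] [MeasureSpace β] [SigmaFinite (volume : Measure α)]
  [SigmaFinite (volume : Measure β)]

theorem measurePreserving_arrowProdEquivProdArrowPerm (ρ : Perm ι) :
    MeasurePreserving (arrowProdEquivProdArrowPerm (α := α) (β := β) ρ) := by
  have hprod : MeasurePreserving ((MeasurableEquiv.refl (ι → α)).prodCongr
      (MeasurableEquiv.piCongrLeft (fun _ => β) ρ)) :=
    (MeasurePreserving.id volume).prod (volume_measurePreserving_piCongrLeft _ ρ)
  exact hprod.comp (volume_measurePreserving_arrowProdEquivProdArrow α β ι)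

variable [RCLike 𝕜]

theorem integrable_prod_apply_perm {F : ι → α × β → 𝕜} (hF : ∀ j, Integrable (F j))
    (ρ : Perm ι) :
    Integrable fun X : (ι → α) × (ι → β) => ∏ j, F j (X.1 j, X.2 (ρ j)) := by
  rw [← (measurePreserving_arrowProdEquivProdArrowPerm ρ).integrable_comp_emb
    (MeasurableEquiv.measurableEmbedding _)]
  simp only [Function.comp_def, arrowProdEquivProdArrowPerm_apply]
  exact Integrable.fintype_prod hF

theorem integral_prod_apply_perm (F : ι → α × β → 𝕜) (ρ : Perm ι) :
    ∫ X : (ι → α) × (ι → β), ∏ j, F j (X.1 j, X.2 (ρ j)) = ∏ j, ∫ s, F j s := by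
  rw [← (measurePreserving_arrowProdEquivProdArrowPerm ρ).integral_comp'
    (fun X : (ι → α) × (ι → β) => ∏ j, F j (X.1 j, X.2 (ρ j)))]
  simp only [arrowProdEquivProdArrowPerm_apply]
  exact integral_fintype_prod_eq_prod F

variable [DecidableEq ι]

theorem integral_det_mul_det_mul_det (f : ι → α → 𝕜) (K : α → β → 𝕜) (g : ι → β → 𝕜)
    (hfKg : ∀ i j, Integrable fun s : α × β => f i s.1 * K s.1 s.2 * g j s.2) :
    ∫ X : (ι → α) × (ι → β), (of fun i j => f i (X.1 j)).det *
        (of fun i j => K (X.1 i) (X.2 j)).det * (of fun i j => g i (X.2 j)).det =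
      ((Fintype.card ι).factorial : 𝕜) ^ 2 *
        (of fun i j => ∫ s : α × β, f i s.1 * K s.1 s.2 * g j s.2).det := by
  let F (σ π τ : Perm ι) (j : ι) (s : α × β) : 𝕜 :=
    f (τ j) s.1 * K s.1 s.2 * g ((σ * π) j) s.2
  have hint (σ π τ : Perm ι) : Integrable fun X : (ι → α) × (ι → β) =>
      (Perm.sign σ * Perm.sign π * Perm.sign τ : 𝕜) * ∏ j, F σ π τ j (X.1 j, X.2 (π j)) :=
    (integrable_prod_apply_perm (fun j => hfKg (τ j) ((σ * π) j)) π).const_mul _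
  have hint_eq (σ π τ : Perm ι) : ∫ X : (ι → α) × (ι → β),
      (Perm.sign σ * Perm.sign π * Perm.sign τ : 𝕜) * ∏ j, F σ π τ j (X.1 j, X.2 (π j)) =
        (Perm.sign σ * Perm.sign π * Perm.sign τ : 𝕜) * ∏ j, ∫ s, F σ π τ j s := by
    rw [integral_const_mul, integral_prod_apply_perm]
  simp only [det_mul_det_mul_det_eq_sum]
  rw [← sum_sum_sum_sign_mul_prod_apply_perm, integral_finsetSum _ fun σ _ =>
    integrable_finsetSum _ fun π _ => integrable_finsetSum _ fun τ _ => hint σ π τ]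
  refine sum_congr rfl fun σ _ => ?_
  rw [integral_finsetSum _ fun π _ => integrable_finsetSum _ fun τ _ => hint σ π τ]
  refine sum_congr rfl fun π _ => ?_
  rw [integral_finsetSum _ fun τ _ => hint σ π τ]
  exact sum_congr rfl fun τ _ => hint_eq σ π τ

end Andreief

theorem cmmAvg_eq_mul_det_pairing {N : ℕ} (wL wR : ℝ → ℂ) (ω : ℝ → ℝ → ℂ)
    (O : (Fin N → ℝ) → (Fin N → ℝ) → ℂ) (a b : Fin N → ℝ → ℂ) (c : ℂ)
    (hab : ∀ i j, Integrable (pairingIntegrand wL wR ω (a i) (b j)))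
    (hO : ∀ x y : Fin N → ℝ, (∏ i, wL (x i) * wR (y i)) ≠ 0 →
      O x y * Delta x * Delta y =
        c * (of fun i j => a i (x j)).det * (of fun i j => b i (y j)).det) :
    cmmAvg N wL wR ω O = c * (of fun i j => pairing wL wR ω (a i) (b j)).det := by
  set K : ℝ → ℝ → ℂ := fun x y => wL x * ω x y * wR y
  have hK : ∀ i j, pairingIntegrand wL wR ω (a i) (b j) =
      fun s => a i s.1 * K s.1 s.2 * b j s.2 := fun i j => funext fun s => by
    simp only [pairingIntegrand, K]; ring
  have hdetK : ∀ x y : Fin N → ℝ, (of fun i j => K (x i) (y j)).det =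
      (∏ i, wL (x i) * wR (y i)) * (of fun i j => ω (x i) (y j)).det := fun x y => by
    have hrow := det_mul_row (fun j => wR (y j)) (of fun i j => wL (x i) * ω (x i) (y j))
    have hcol := det_mul_column (fun i => wL (x i)) (of fun i j => ω (x i) (y j))
    simp only [of_apply] at hrow hcol
    simp only [K, mul_comm (wL _ * _), hrow, hcol, prod_mul_distrib]
    ring
  have hpt : ∀ X : (Fin N → ℝ) × (Fin N → ℝ), cmmIntegrand N wL wR ω O X =
      c * ((of fun i j => a i (X.1 j)).det * (of fun i j => K (X.1 i) (X.2 j)).det *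
        (of fun i j => b i (X.2 j)).det) := fun X => by
    rw [hdetK]
    by_cases hW : (∏ i, wL (X.1 i) * wR (X.2 i)) = 0
    · simp [cmmIntegrand, hW]
    · simp only [cmmIntegrand]
      linear_combination (∏ i, wL (X.1 i) * wR (X.2 i)) *
        (of fun i j => ω (X.1 i) (X.2 j)).det * hO X.1 X.2 hW
  have hN : ((N.factorial : ℂ) ^ 2) ≠ 0 := pow_ne_zero _ (Nat.cast_ne_zero.2 N.factorial_ne_zero)
  simp only [cmmAvg, hpt, integral_const_mul, pairing, hK]
  rw [integral_det_mul_det_mul_det a K b fun i j => hK i j ▸ hab i j, Fintype.card_fin,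
    mul_left_comm, inv_mul_cancel_left₀ hN]

theorem DeltaC_ne_zero {n : ℕ} {z : Fin n → ℂ} (hz : Function.Injective z) : DeltaC z ≠ 0 :=
  prod_ne_zero_iff.2 fun _ _ => prod_ne_zero_iff.2 fun _ hj =>
    sub_ne_zero.2 (hz.ne (mem_Ioi.1 hj).ne)

theorem ne_ofReal_of_apply_ne_zero {R : ℝ} {v : ℝ → ℂ} (hv : ∀ x : ℝ, R < |x| → v x = 0)
    {z : ℂ} (hz : R < ‖z‖) {x : ℝ} (hx : v x ≠ 0) : z ≠ x := by
  rintro rfl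
  rw [Complex.norm_real, Real.norm_eq_abs] at hz
  exact hx (hv x hz)

theorem prod_inv_mul_Delta_mul_Delta {n m : ℕ} (p q : Fin n → Polynomial ℂ)
    (hp_deg : ∀ k, (p k).natDegree = k) (hp_monic : ∀ k, (p k).Monic)
    (hq_deg : ∀ k, (q k).natDegree = k) (hq_monic : ∀ k, (q k).Monic)
    {z w : Fin m → ℂ} (hz : Function.Injective z) (hw : Function.Injective w)
    {x y : Fin (n + m) → ℝ} (hzx : ∀ α j, z α ≠ x j) (hwy : ∀ α j, w α ≠ y j) :
    (∏ α, ∏ i, (z α - (x i : ℂ))⁻¹ * (w α - (y i : ℂ))⁻¹) * Delta x * Delta y =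
      (DeltaC z * DeltaC w)⁻¹ *
        (of fun i j => cauchyVandermondeRow p z (finSumFinEquiv.symm i) (x j : ℂ)).det *
        (of fun i j => cauchyVandermondeRow q w (finSumFinEquiv.symm i) (y j : ℂ)).det := by
  have hx : _ * _ = DeltaC z * _ :=
    det_cauchyVandermondeRow_mul_prod p hp_deg hp_monic z hz (fun j => (x j : ℂ)) hzx
  have hy : _ * _ = DeltaC w * _ :=
    det_cauchyVandermondeRow_mul_prod q hq_deg hq_monic w hw (fun j => (y j : ℂ)) hwy
  have hΔ : Delta x * Delta y =
      (vandermonde fun j => (x j : ℂ)).det * (vandermonde fun j => (y j : ℂ)).det := by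
    rw [det_vandermonde, det_vandermonde]
    exact prod_Ioi_sub_mul_prod_Ioi_sub _ _
  have hO : (∏ α, ∏ i, (z α - (x i : ℂ))⁻¹ * (w α - (y i : ℂ))⁻¹) =
      (∏ i, ∏ α, (z α - (x i : ℂ)))⁻¹ * (∏ i, ∏ α, (w α - (y i : ℂ)))⁻¹ := by
    rw [prod_comm]
    simp only [prod_mul_distrib, prod_inv_distrib]
  have hPx : ∏ i, ∏ α, (z α - (x i : ℂ)) ≠ 0 :=
    prod_ne_zero_iff.2 fun i _ => prod_ne_zero_iff.2 fun α _ => sub_ne_zero.2 (hzx α i)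
  have hPy : ∏ i, ∏ α, (w α - (y i : ℂ)) ≠ 0 :=
    prod_ne_zero_iff.2 fun i _ => prod_ne_zero_iff.2 fun α _ => sub_ne_zero.2 (hwy α i)
  rw [mul_assoc, hΔ, hO, eq_div_of_mul_eq hPx hx, eq_div_of_mul_eq hPy hy]
  field_simp [DeltaC_ne_zero hz, DeltaC_ne_zero hw]

theorem pairing_cauchyVandermondeRow_eq_fromBlocks {n m : ℕ} (wL wR : ℝ → ℂ)
    (ω : ℝ → ℝ → ℂ) (p q : Fin n → Polynomial ℂ) (z w : Fin m → ℂ) :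
    (of fun i j => pairing wL wR ω (fun x => cauchyVandermondeRow p z i x)
        (fun y => cauchyVandermondeRow q w j y)) =
      fromBlocks
        (of fun k l => pairing wL wR ω (fun x => (p k).eval (x : ℂ)) (fun y => (q l).eval (y : ℂ)))
        (of fun k β => pairing wL wR ω (fun x => (p k).eval (x : ℂ)) (fun y => (w β - y)⁻¹))
        (of fun α l => pairing wL wR ω (fun x => (z α - x)⁻¹) (fun y => (q l).eval (y : ℂ)))
        (of fun α β => pairing wL wR ω (fun x => (z α - x)⁻¹) (fun y => (w β - y)⁻¹)) := by
  ext (k | α) (l | β) <;> rfl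

theorem pair_correlation_char_poly_inverse_le_general (N M : ℕ) (hMN : M ≤ N)
    (wL wR : ℝ → ℂ) (ω : ℝ → ℝ → ℂ)
    (P Q : ℕ → Polynomial ℂ) (h : ℕ → ℂ)
    (hP : ∀ k < N, (P k).Monic ∧ (P k).natDegree = k)
    (hQ : ∀ k < N, (Q k).Monic ∧ (Q k).natDegree = k)
    (hh : ∀ i < N, h i ≠ 0)
    (hpairInt : ∀ i < N, ∀ j < N, Integrable (pairingIntegrand wL wR ω
      (fun x => (P i).eval (x : ℂ)) (fun y => (Q j).eval (y : ℂ))))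
    (hbo : ∀ i < N, ∀ j < N,
      pairing wL wR ω (fun x => (P i).eval (x : ℂ)) (fun y => (Q j).eval (y : ℂ))
        = if i = j then h i else 0)
    (R : ℝ) (hsuppL : ∀ x : ℝ, R < |x| → wL x = 0) (hsuppR : ∀ x : ℝ, R < |x| → wR x = 0)
    (z w : Fin M → ℂ) (hz : Function.Injective z) (hw : Function.Injective w)
    (hzR : ∀ α, R < ‖z α‖) (hwRad : ∀ α, R < ‖w α‖)
    (hInt1 : ∀ (α β : Fin M), Integrable (pairingIntegrand wL wR ω
      (fun x => (z α - (x : ℂ))⁻¹) (fun y => (w β - (y : ℂ))⁻¹)))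
    (hInt2 : ∀ (α : Fin M), ∀ j < N, Integrable (pairingIntegrand wL wR ω
      (fun x => (z α - (x : ℂ))⁻¹) (fun y => (Q j).eval (y : ℂ))))
    (hInt3 : ∀ i < N, ∀ (β : Fin M), Integrable (pairingIntegrand wL wR ω
      (fun x => (P i).eval (x : ℂ)) (fun y => (w β - (y : ℂ))⁻¹))) :
    cmmAvg N wL wR ω (fun XL XR => ∏ α : Fin M, ∏ i : Fin N,
        (z α - (XL i : ℂ))⁻¹ * (w α - (XR i : ℂ))⁻¹)
      = ((∏ i ∈ Finset.range (N - M), h i) / (DeltaC z * DeltaC w)) *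
          (Matrix.of fun α β : Fin M =>
            pairing wL wR ω (fun x => (z α - (x : ℂ))⁻¹) (fun y => (w β - (y : ℂ))⁻¹)
              - ∑ i ∈ Finset.range (N - M), (h i)⁻¹ *
                  (pairing wL wR ω (fun x => (z α - (x : ℂ))⁻¹)
                    (fun y => (Q i).eval (y : ℂ)) *
                   pairing wL wR ω (fun x => (P i).eval (x : ℂ))
                    (fun y => (w β - (y : ℂ))⁻¹))).det := by
  obtain ⟨n, rfl⟩ : ∃ n, N = n + M := ⟨N - M, by omega⟩
  simp only [Nat.add_sub_cancel, prod_range, sum_range]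
  have hk : ∀ k : Fin n, (k : ℕ) < n + M := fun k => by omega
  let a := cauchyVandermondeRow (fun k : Fin n => P k) z
  let b := cauchyVandermondeRow (fun k : Fin n => Q k) w
  have hab : ∀ i j, Integrable (pairingIntegrand wL wR ω (fun x => a i x) (fun y => b j y)) := by
    rintro (k | α) (l | β)
    exacts [hpairInt k (hk k) l (hk l), hInt3 k (hk k) β, hInt2 α l (hk l), hInt1 α β]
  have hdiag : (of fun k l : Fin n => pairing wL wR ω (fun x => (P k).eval (x : ℂ))
      (fun y => (Q l).eval (y : ℂ))) = diagonal fun k : Fin n => h k := by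
    ext k l
    simp [hbo k (hk k) l (hk l), diagonal_apply, Fin.val_inj]
  have hO (x y : Fin (n + M) → ℝ) (hW : (∏ i, wL (x i) * wR (y i)) ≠ 0) :=
    prod_inv_mul_Delta_mul_Delta _ _ (fun k => (hP k (hk k)).2) (fun k => (hP k (hk k)).1)
      (fun k => (hQ k (hk k)).2) (fun k => (hQ k (hk k)).1) hz hw
      (fun α j => ne_ofReal_of_apply_ne_zero hsuppL (hzR α) (mul_ne_zero_iff.1
        (prod_ne_zero_iff.1 hW j (mem_univ j))).1)
      (fun α j => ne_ofReal_of_apply_ne_zero hsuppR (hwRad α) (mul_ne_zero_iff.1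
        (prod_ne_zero_iff.1 hW j (mem_univ j))).2)
  rw [cmmAvg_eq_mul_det_pairing wL wR ω _ (fun i x => a (finSumFinEquiv.symm i) x)
      (fun i y => b (finSumFinEquiv.symm i) y) _ (fun i j => hab _ _) hO,
    show (of fun i j => pairing wL wR ω _ _) = (of fun i j => pairing wL wR ω
      (fun x => a i x) (fun y => b j y)).submatrix finSumFinEquiv.symm finSumFinEquiv.symm
      from rfl,
    det_submatrix_equiv_self, pairing_cauchyVandermondeRow_eq_fromBlocks, hdiag,
    det_fromBlocks_diagonal₁₁ fun k : Fin n => hh k (hk k),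
    div_eq_inv_mul, mul_assoc]
  rfl

/-- **Pair correlation of characteristic polynomial inverses, case `M ≤ N`.** For
biorthogonal monic polynomials with nonzero normalization constants, weights supported in
`[−R,R]`, and pairwise distinct `z_α`, `w_α` of modulus `> R`,
`I_N[∏_{α,i}(z_α − x_{L,i})⁻¹(w_α − x_{R,i})⁻¹]
 = (∏_{i<N−M} h_i / (Δ_M(Z)Δ_M(W))) ·
   det( ⟨(z_α−·)⁻¹|ω|(w_β−·)⁻¹⟩ − ∑_{i<N−M} h_i⁻¹ ⟨(z_α−·)⁻¹|ω|Q_i⟩⟨P_i|ω|(w_β−·)⁻¹⟩ )`. -/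
theorem pair_correlation_char_poly_inverse_le (N M : ℕ) (hM : 1 ≤ M) (hMN : M ≤ N)
    (wL wR : ℝ → ℂ) (ω : ℝ → ℝ → ℂ)
    (hwL : Measurable wL) (hwR : Measurable wR) (hω : Measurable (Function.uncurry ω))
    (P Q : ℕ → Polynomial ℂ) (h : ℕ → ℂ)
    (hP : ∀ k < N, (P k).Monic ∧ (P k).natDegree = k)
    (hQ : ∀ k < N, (Q k).Monic ∧ (Q k).natDegree = k)
    (hh : ∀ i < N, h i ≠ 0)
    (hpairInt : ∀ i < N, ∀ j < N, Integrable (pairingIntegrand wL wR ω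
      (fun x => (P i).eval (x : ℂ)) (fun y => (Q j).eval (y : ℂ))))
    (hbo : ∀ i < N, ∀ j < N,
      pairing wL wR ω (fun x => (P i).eval (x : ℂ)) (fun y => (Q j).eval (y : ℂ))
        = if i = j then h i else 0)
    (R : ℝ) (hsuppL : ∀ x : ℝ, R < |x| → wL x = 0) (hsuppR : ∀ x : ℝ, R < |x| → wR x = 0)
    (z w : Fin M → ℂ) (hz : Function.Injective z) (hw : Function.Injective w)
    (hzR : ∀ α, R < ‖z α‖) (hwRad : ∀ α, R < ‖w α‖)
    (hInt1 : ∀ (α β : Fin M), Integrable (pairingIntegrand wL wR ω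
      (fun x => (z α - (x : ℂ))⁻¹) (fun y => (w β - (y : ℂ))⁻¹)))
    (hInt2 : ∀ (α : Fin M), ∀ j < N, Integrable (pairingIntegrand wL wR ω
      (fun x => (z α - (x : ℂ))⁻¹) (fun y => (Q j).eval (y : ℂ))))
    (hInt3 : ∀ i < N, ∀ (β : Fin M), Integrable (pairingIntegrand wL wR ω
      (fun x => (P i).eval (x : ℂ)) (fun y => (w β - (y : ℂ))⁻¹)))
    (hObs : Integrable (cmmIntegrand N wL wR ω
      fun XL XR => ∏ α : Fin M, ∏ i : Fin N,
        (z α - (XL i : ℂ))⁻¹ * (w α - (XR i : ℂ))⁻¹)) :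
    cmmAvg N wL wR ω (fun XL XR => ∏ α : Fin M, ∏ i : Fin N,
        (z α - (XL i : ℂ))⁻¹ * (w α - (XR i : ℂ))⁻¹)
      = ((∏ i ∈ Finset.range (N - M), h i) / (DeltaC z * DeltaC w)) *
          (Matrix.of fun α β : Fin M =>
            pairing wL wR ω (fun x => (z α - (x : ℂ))⁻¹) (fun y => (w β - (y : ℂ))⁻¹)
              - ∑ i ∈ Finset.range (N - M), (h i)⁻¹ *
                  (pairing wL wR ω (fun x => (z α - (x : ℂ))⁻¹)
                    (fun y => (Q i).eval (y : ℂ)) *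
                   pairing wL wR ω (fun x => (P i).eval (x : ℂ))
                    (fun y => (w β - (y : ℂ))⁻¹))).det :=
  pair_correlation_char_poly_inverse_le_general N M hMN wL wR ω P Q h hP hQ hh hpairInt hbo R hsuppL
    hsuppR z w hz hw hzR hwRad hInt1 hInt2 hInt3
end

section
/- Coupled polynomial ensemble partition function factorization: Let N ≥ 1, let f_{L,0},…,f_{L,N−1} : ℝ → ℂ be measurable functions, let F_{L,0},…,F_{L,N−1} : ℝ → ℂ be such that for each i, F_{L,i} = f_{L,i} + ∑_{k=0}^{i−1} c_{i,k} f_{L,k} for some scalars c_{i,k} ∈ ℂ, and let Q_0,…,Q_{N−1} be monic polynomials with deg Q_j = j satisfying the biorthogonality ⟨F_{L,i}|ω|Q_j⟩_R = h_{L,i} δ_{i,j} for all 0 ≤ i,j ≤ N−1, where ⟨f|ω|g⟩_R = ∫_{ℝ²} w_R(y) f(x) ω(x,y) g(y) dx dy. Assuming all the integrals below are absolutely convergent, Z_{N,f_L} := (1/N!²) ∫_{ℝ^N×ℝ^N} (∏_{i=1}^N w_R(x_{R,i})) · det_{1≤i,j≤N}( f_{L,N−i}(x_{L,j}) ) ·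 det_{1≤i,j≤N} ω(x_{L,i}, x_{R,j}) · Δ_N(X_R) dX_L dX_R = ∏_{i=0}^{N−1} h_{L,i}. -/
open MeasureTheory Matrix Finset

/-- Integrand of the one-sided pairing `⟨f|ω|g⟩_R = ∫ w_R(y) f(x) ω(x,y) g(y) dx dy`. -/
noncomputable def pairingRIntegrand (wR : ℝ → ℂ) (ω : ℝ → ℝ → ℂ) (f g : ℝ → ℂ) :
    ℝ × ℝ → ℂ :=
  fun s => wR s.2 * f s.1 * ω s.1 s.2 * g s.2

/-- The one-sided pairing `⟨f|ω|g⟩_R = ∫ w_R(y) f(x) ω(x,y) g(y) dx dy`. -/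
noncomputable def pairingR (wR : ℝ → ℂ) (ω : ℝ → ℝ → ℂ) (f g : ℝ → ℂ) : ℂ :=
  ∫ s : ℝ × ℝ, pairingRIntegrand wR ω f g s

/-- Integrand of the coupled polynomial ensemble partition function `Z_{N,f_L}`. -/
noncomputable def peIntegrand (N : ℕ) (wR : ℝ → ℂ) (ω : ℝ → ℝ → ℂ) (f : ℕ → ℝ → ℂ) :
    (Fin N → ℝ) × (Fin N → ℝ) → ℂ :=
  fun X => (∏ i, wR (X.2 i)) *
    (Matrix.of fun i j : Fin N => f (N - 1 - (i : ℕ)) (X.1 j)).det *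
    (Matrix.of fun i j => ω (X.1 i) (X.2 j)).det * Delta X.2


/-!
Row operations with the unitriangular coefficients `c` turn `det (f_{N-1-i}(x_j))` into
`det (F_{N-1-i}(x_j))`, and since the `Q_j` are monic of degree `j`, `Δ_N(Y)` is the determinant
of `Q_{N-1-i}(y_j)`. The integrand is then of Andréief form
`∏ w_R(y_i) · det (A_i(x_j)) · det (ω(x_i, y_j)) · det (B_i(y_j))`: expanding the three
determinants, every term is a product over `j` of one-pair integrands evaluated at
`(x_{π j}, y_j)`, so by Fubini the integral is `N!² · det (⟨A_i|ω|B_j⟩_R)`. Biorthogonality makes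
this matrix diagonal with entries `h_{N-1-i}`.
-/

open Equiv

section Determinant

variable {ι R : Type*} [Fintype ι] [DecidableEq ι] [CommRing R]

theorem Equiv.Perm.intCast_sign_mul_self (σ : Perm ι) :
    (Perm.sign σ : R) * (Perm.sign σ : R) = 1 := by
  rw [← Int.cast_mul, Int.units_coe_mul_self, Int.cast_one]

theorem Matrix.sum_sign_mul_sign_mul_prod (P : Matrix ι ι R) :
    ∑ σ : Perm ι, ∑ τ : Perm ι, (Perm.sign σ : R) * Perm.sign τ * ∏ j, P (σ j) (τ j) =
      (Fintype.card ι).factorial * P.det := by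
  have sum_sign_mul_prod (σ : Perm ι) :
      ∑ τ : Perm ι, (Perm.sign τ : R) * ∏ j, P (σ j) (τ j) = Perm.sign σ * P.det := by
    rw [← det_permute, ← det_transpose, det_apply']
    rfl
  simp_rw [mul_assoc, ← Finset.mul_sum, sum_sign_mul_prod, ← mul_assoc,
    Perm.intCast_sign_mul_self, one_mul, sum_const, card_univ, Fintype.card_perm, nsmul_eq_mul]

theorem Matrix.det_mul_det_eq_sum_submatrix (M N : Matrix ι ι R) :
    M.det * N.det = ∑ π : Perm ι, (M.submatrix id π).det * ∏ j, N (π j) j := by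
  rw [det_apply' N, Finset.mul_sum]
  refine sum_congr rfl fun π _ => ?_
  rw [det_permute']
  ring

theorem Matrix.det_eq_of_eq_add_sum_Iio [LinearOrder ι] [LocallyFiniteOrderBot ι]
    {M M' : Matrix ι ι R} (c : ι → ι → R)
    (h : ∀ i j, M' i j = M i j + ∑ k ∈ Iio i, c i k * M k j) : M'.det = M.det := by
  set L : Matrix ι ι R := 1 + of fun i k => if k < i then c i k else 0
  refine det_eq_of_eq_det_one_mul L ?_ ?_
  · rw [det_of_isLowerTriangular L fun i k hik => ?_]
    · simp [L]
    · have hik : i < k := hik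
      simp [L, hik.ne, hik.asymm]
  · ext i j
    rw [h, add_mul, one_mul, add_apply, mul_apply]
    simp [ite_mul, sum_ite, filter_gt_eq_Iio]

end Determinant

section FinRev

open Polynomial

variable {R : Type*} [CommRing R] {n : ℕ}

theorem Matrix.of_sub_one_sub_eq_submatrix_revPerm {α : Type*} (g : ℕ → Fin n → α) :
    (of fun i j : Fin n => g (n - 1 - i) j) =
      (of fun i j : Fin n => g i j).submatrix Fin.revPerm id := by
  ext i j
  simp only [of_apply, submatrix_apply, id_eq, Fin.revPerm_apply, Fin.val_rev]
  congr 1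
  omega

theorem Fin.prod_Ioi_rev {M : Type*} [CommMonoid M] (g : Fin n → Fin n → M) :
    ∏ i : Fin n, ∏ j ∈ Ioi i, g j.rev i.rev = ∏ i : Fin n, ∏ j ∈ Ioi i, g i j :=
  calc ∏ i : Fin n, ∏ j ∈ Ioi i, g j.rev i.rev = ∏ i, ∏ j ∈ Ioi i.rev, g j.rev i :=
        Fintype.prod_equiv revPerm _ _ fun i => by simp
    _ = ∏ i, ∏ j ∈ Iio i, g j i := by
        refine Fintype.prod_congr _ _ fun i => ?_
        have h_map := map_revPerm_Ioi i.rev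
        rw [rev_rev] at h_map
        rw [← h_map, prod_map]
        rfl
    _ = ∏ i, ∏ j ∈ Ioi i, g i j := prod_comm' (by simp)

theorem Matrix.det_of_eval_sub_one_sub_eq_prod_Ioi (Q : ℕ → R[X])
    (hQ : ∀ k < n, (Q k).Monic ∧ (Q k).natDegree = k) (v : Fin n → R) :
    (of fun i j : Fin n => (Q (n - 1 - i)).eval (v j)).det = ∏ i, ∏ j ∈ Ioi i, (v i - v j) := by
  have h_transpose : (of fun i j : Fin n => (Q (n - 1 - i)).eval (v j))ᵀ =
      (of fun a b : Fin n => (Q b).eval (v a.rev)).submatrix Fin.revPerm Fin.revPerm := by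
    ext i j
    simp only [transpose_apply, of_apply, submatrix_apply, Fin.revPerm_apply, Fin.rev_rev,
      Fin.val_rev]
    congr 2
    omega
  rw [← det_transpose, h_transpose, det_submatrix_equiv_self,
    ← det_eval_matrixOfPolynomials_eq_det_vandermonde _ _ (fun b => (hQ b b.isLt).2)
      (fun b => (hQ b b.isLt).1), det_vandermonde, ← Fin.prod_Ioi_rev]
  simp only [Fin.rev_rev]

theorem Matrix.det_of_sub_one_sub_eq_of_triangular {α : Type*} {f F : ℕ → α → R}
    (c : ℕ → ℕ → R) (hF : ∀ i < n, ∀ x, F i x = f i x + ∑ k ∈ range i, c i k * f k x)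
    (x : Fin n → α) :
    (of fun i j : Fin n => F (n - 1 - i) (x j)).det =
      (of fun i j : Fin n => f (n - 1 - i) (x j)).det := by
  rw [of_sub_one_sub_eq_submatrix_revPerm (fun k j => F k (x j)),
    of_sub_one_sub_eq_submatrix_revPerm (fun k j => f k (x j)), det_permute, det_permute]
  congr 1
  refine det_eq_of_eq_add_sum_Iio (fun i k => c i k) fun i j => ?_
  rw [of_apply, of_apply, hF i i.isLt, ← Nat.Iio_eq_range, ← Fin.map_valEmbedding_Iio, sum_map]
  rfl

end FinRev

section ZipPerm

variable {ι α β : Type*}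

-- `X ↦ fun j => (X.1 (π j), X.2 j)`
noncomputable def MeasurableEquiv.zipPerm [MeasurableSpace α] [MeasurableSpace β] (π : Perm ι) :
    (ι → α) × (ι → β) ≃ᵐ (ι → α × β) :=
  ((MeasurableEquiv.arrowCongr' π.symm (.refl α)).prodCongr (.refl (ι → β))).trans
    (MeasurableEquiv.arrowProdEquivProdArrow α β ι).symm

variable [Fintype ι] [MeasureSpace α] [MeasureSpace β]
  [SigmaFinite (volume : Measure α)] [SigmaFinite (volume : Measure β)]

theorem MeasurableEquiv.measurePreserving_zipPerm (π : Perm ι) :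
    MeasurePreserving (zipPerm (α := α) (β := β) π) :=
  (volume_measurePreserving_arrowProdEquivProdArrow α β ι).symm _ |>.comp <|
    (volume_preserving_arrowCongr' _ _ (.id _)).prod (.id _)

variable {𝕜 : Type*} [RCLike 𝕜]

theorem integrable_prod_comp_zipPerm {g : ι → α × β → 𝕜} (hg : ∀ j, Integrable (g j))
    (π : Perm ι) : Integrable fun X : (ι → α) × (ι → β) => ∏ j, g j (X.1 (π j), X.2 j) :=
  ((MeasurableEquiv.measurePreserving_zipPerm π).integrable_comp_emb
    (MeasurableEquiv.zipPerm π).measurableEmbedding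
    (g := fun z => ∏ j, g j (z j))).mpr (Integrable.fintype_prod hg)

theorem integral_prod_comp_zipPerm (g : ι → α × β → 𝕜) (π : Perm ι) :
    ∫ X : (ι → α) × (ι → β), ∏ j, g j (X.1 (π j), X.2 j) = ∏ j, ∫ z, g j z := by
  rw [← integral_fintype_prod_volume_eq_prod]
  exact (MeasurableEquiv.measurePreserving_zipPerm π).integral_comp' (fun z => ∏ j, g j (z j))

end ZipPerm

section Andreief

variable {ι : Type*} [Fintype ι] [DecidableEq ι] (wR : ℝ → ℂ) (ω : ℝ → ℝ → ℂ)

theorem andreief_integrand_eq_sum (A B : ι → ℝ → ℂ) (x y : ι → ℝ) :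
    (∏ i, wR (y i)) * (of fun i j => A i (x j)).det * (of fun i j => ω (x i) (y j)).det *
        (of fun i j => B i (y j)).det =
      ∑ π : Perm ι, ∑ σ : Perm ι, ∑ τ : Perm ι, (Perm.sign σ : ℂ) * Perm.sign τ *
        ∏ j, pairingRIntegrand wR ω (A (σ j)) (B (τ j)) (x (π j), y j) := by
  rw [mul_assoc (∏ i, wR (y i)), det_mul_det_eq_sum_submatrix, mul_sum, sum_mul]
  refine sum_congr rfl fun π _ => ?_
  rw [det_apply', det_apply']
  simp only [sum_mul, mul_sum]
  rw [sum_comm]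
  refine sum_congr rfl fun σ _ => sum_congr rfl fun τ _ => ?_
  simp only [pairingRIntegrand, prod_mul_distrib, of_apply, submatrix_apply, id_eq]
  ring

theorem andreief_identity (A B : ι → ℝ → ℂ)
    (hint : ∀ i j, Integrable (pairingRIntegrand wR ω (A i) (B j))) :
    ∫ X : (ι → ℝ) × (ι → ℝ), (∏ i, wR (X.2 i)) * (of fun i j => A i (X.1 j)).det *
        (of fun i j => ω (X.1 i) (X.2 j)).det * (of fun i j => B i (X.2 j)).det =
      ((Fintype.card ι).factorial : ℂ) ^ 2 * (of fun i j => pairingR wR ω (A i) (B j)).det := by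
  have term_integrable (π σ τ : Perm ι) : Integrable fun X : (ι → ℝ) × (ι → ℝ) =>
      (Perm.sign σ : ℂ) * Perm.sign τ *
        ∏ j, pairingRIntegrand wR ω (A (σ j)) (B (τ j)) (X.1 (π j), X.2 j) :=
    (integrable_prod_comp_zipPerm (fun j => hint _ _) π).const_mul _
  calc
    _ = ∑ π : Perm ι, ∑ σ : Perm ι, ∑ τ : Perm ι, (Perm.sign σ : ℂ) * Perm.sign τ *
          ∏ j, pairingR wR ω (A (σ j)) (B (τ j)) := by
      simp_rw [andreief_integrand_eq_sum]
      rw [integral_finsetSum _ fun π _ => integrable_finsetSum _ fun σ _ =>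
        integrable_finsetSum _ fun τ _ => term_integrable π σ τ]
      refine sum_congr rfl fun π _ => ?_
      rw [integral_finsetSum _ fun σ _ => integrable_finsetSum _ fun τ _ => term_integrable π σ τ]
      refine sum_congr rfl fun σ _ => ?_
      rw [integral_finsetSum _ fun τ _ => term_integrable π σ τ]
      refine sum_congr rfl fun τ _ => ?_
      rw [integral_const_mul, integral_prod_comp_zipPerm]
      rfl
    _ = _ := by
      have := sum_sign_mul_sign_mul_prod (of fun i j => pairingR wR ω (A i) (B j))
      simp only [of_apply] at this
      rw [this, sum_const, card_univ, Fintype.card_perm, nsmul_eq_mul]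
      ring

end Andreief

theorem pe_partition_function_factorizes_general (N : ℕ)
    (wR : ℝ → ℂ) (ω : ℝ → ℝ → ℂ)
    (f F : ℕ → ℝ → ℂ)
    (c : ℕ → ℕ → ℂ)
    (hF : ∀ i < N, ∀ x : ℝ, F i x = f i x + ∑ k ∈ Finset.range i, c i k * f k x)
    (Q : ℕ → Polynomial ℂ)
    (hQ : ∀ k < N, (Q k).Monic ∧ (Q k).natDegree = k)
    (h : ℕ → ℂ)
    (hpairInt : ∀ i < N, ∀ j < N, Integrable (pairingRIntegrand wR ω (F i)
      (fun y => (Q j).eval (y : ℂ))))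
    (hbo : ∀ i < N, ∀ j < N,
      pairingR wR ω (F i) (fun y => (Q j).eval (y : ℂ)) = if i = j then h i else 0) :
    ((N.factorial : ℂ) ^ 2)⁻¹ * ∫ X : (Fin N → ℝ) × (Fin N → ℝ), peIntegrand N wR ω f X
      = ∏ i ∈ Finset.range N, h i := by
  have rev_lt (i : Fin N) : N - 1 - (i : ℕ) < N := by omega
  have integrand_eq (X : (Fin N → ℝ) × (Fin N → ℝ)) : peIntegrand N wR ω f X =
      (∏ i, wR (X.2 i)) * (of fun i j : Fin N => F (N - 1 - i) (X.1 j)).det *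
        (of fun i j => ω (X.1 i) (X.2 j)).det *
        (of fun i j : Fin N => (Q (N - 1 - i)).eval (X.2 j : ℂ)).det := by
    rw [peIntegrand, Delta, det_of_sub_one_sub_eq_of_triangular c hF,
      det_of_eval_sub_one_sub_eq_prod_Ioi Q hQ (fun j => (X.2 j : ℂ))]
  have pairing_eq_diagonal : (of fun i j : Fin N =>
      pairingR wR ω (F (N - 1 - i)) fun y => (Q (N - 1 - j)).eval (y : ℂ)) =
        diagonal fun i : Fin N => h (N - 1 - i) := by
    ext i j
    rw [of_apply, hbo _ (rev_lt i) _ (rev_lt j), diagonal_apply]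
    simp only [Fin.ext_iff]
    split_ifs <;> first | rfl | omega
  simp_rw [integrand_eq]
  rw [andreief_identity wR ω _ _ fun i j => hpairInt _ (rev_lt i) _ (rev_lt j), pairing_eq_diagonal,
    det_diagonal, Fintype.card_fin,
    inv_mul_cancel_left₀ (pow_ne_zero _ (Nat.cast_ne_zero.mpr N.factorial_ne_zero)),
    Fin.prod_univ_eq_prod_range (fun k => h (N - 1 - k)), prod_range_reflect]

/-- **Coupled polynomial ensemble partition function factorization.** If
`F_{L,i} = f_{L,i} + ∑_{k<i} c_{i,k} f_{L,k}` and monic polynomials `Q_j` of degree `j`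
satisfy `⟨F_{L,i}|ω|Q_j⟩_R = h_{L,i} δ_{ij}`, then, assuming all integrals are absolutely
convergent, `Z_{N,f_L} = ∏_{i=0}^{N−1} h_{L,i}`. -/
theorem pe_partition_function_factorizes (N : ℕ) (hN : 1 ≤ N)
    (wR : ℝ → ℂ) (ω : ℝ → ℝ → ℂ)
    (hwR : Measurable wR) (hω : Measurable (Function.uncurry ω))
    (f F : ℕ → ℝ → ℂ) (hf : ∀ k < N, Measurable (f k))
    (c : ℕ → ℕ → ℂ)
    (hF : ∀ i < N, ∀ x : ℝ, F i x = f i x + ∑ k ∈ Finset.range i, c i k * f k x)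
    (Q : ℕ → Polynomial ℂ)
    (hQ : ∀ k < N, (Q k).Monic ∧ (Q k).natDegree = k)
    (h : ℕ → ℂ)
    (hpairInt : ∀ i < N, ∀ j < N, Integrable (pairingRIntegrand wR ω (F i)
      (fun y => (Q j).eval (y : ℂ))))
    (hpairInt' : ∀ i < N, ∀ j < N, Integrable (pairingRIntegrand wR ω (f i)
      (fun y => (Q j).eval (y : ℂ))))
    (hbo : ∀ i < N, ∀ j < N,
      pairingR wR ω (F i) (fun y => (Q j).eval (y : ℂ)) = if i = j then h i else 0)
    (hZ : Integrable (peIntegrand N wR ω f)) :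
    ((N.factorial : ℂ) ^ 2)⁻¹ * ∫ X : (Fin N → ℝ) × (Fin N → ℝ), peIntegrand N wR ω f X
      = ∏ i ∈ Finset.range N, h i :=
  pe_partition_function_factorizes_general N wR ω f F c hF Q hQ h hpairInt hbo
end
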